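/- arXiv:2210.09940 — 3 statements merged into one kernel-verified Lean document; each statement's English description precedes it below -/
import Mathlib

section
/- Let Hash be a type and H : Hash × Hash → Hash a function (the Merkle combining hash). Define the root computed from a leaf hash l : Hash along an authentication path p : List (Bool × Hash) by root l [] = l and root l ((side, sib) :: p') = root (if side then H (sib, l) else H (l, sib)) p'. If two leaf hashes l₁ ≠ l₂ have authentication paths p₁, p₂ with the same direction sequence (p₁.map Prod.fst = p₂.map Prod.fst, in particular equal lengths) and root l₁ p₁ = root l₂ p₂, then H has a collision: there exist x ≠ y with H x = H y. -/
/-- The Merkle root computed from a leaf hash along an authentication path: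
each step combines the current hash with a sibling hash on the indicated side. -/
def merkleRoot {Hash : Type*} (H : Hash × Hash → Hash) :
    Hash → List (Bool × Hash) → Hash
  | l, [] => l
  | l, (side, sib) :: p' => merkleRoot H (if side then H (sib, l) else H (l, sib)) p'

/-- PoI-Lemma: two valid proofs of inclusion with the same direction sequence,
for two different leaf hashes, yielding the same root, force a collision in `H`. -/
theorem stmt_1 {Hash : Type*} (H : Hash × Hash → Hash)
    (l₁ l₂ : Hash) (p₁ p₂ : List (Bool × Hash))
    (hne : l₁ ≠ l₂)
    (hdir : p₁.map Prod.fst = p₂.map Prod.fst)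
    (hroot : merkleRoot H l₁ p₁ = merkleRoot H l₂ p₂) :
    ∃ x y : Hash × Hash, x ≠ y ∧ H x = H y := by
  induction p₁ generalizing p₂ l₁ l₂ with
  | nil =>
    cases p₂ with
    | nil => exact absurd hroot hne
    | cons b t => simp at hdir
  | cons a t₁ ih =>
    cases p₂ with
    | nil => simp at hdir
    | cons b t₂ =>
      obtain ⟨s, sib₁⟩ := a
      obtain ⟨s₂, sib₂⟩ := b
      simp at hdir
      obtain ⟨hs, hdir'⟩ := hdir
      subst hs
      by_cases hEq : (if s then H (sib₁, l₁) else H (l₁, sib₁)) =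
          (if s then H (sib₂, l₂) else H (l₂, sib₂))
      · cases s with
        | false =>
          simp at hEq
          exact ⟨(l₁, sib₁), (l₂, sib₂), by simp [hne], hEq⟩
        | true =>
          simp at hEq
          exact ⟨(sib₁, l₁), (sib₂, l₂), by simp [hne], hEq⟩
      · exact ih _ _ _ hEq hdir' hroot
end

section
/- Let V be a finite nonempty type, G a connected simple graph on V, δ : ℝ with 0 ≤ δ, and let D = G.diam (the maximum of G.dist over all pairs of vertices). Let T₁, T₂, T₃ : V → ℝ each satisfy the relay property (for all adjacent u v, T v ≤ T u + δ), and let x, y : V satisfy T₁ x ≤ 2 * δ and T₂ y ≤ 2 * δ. Then there exists a vertex m : V such that T₁ m ≤ 2 * δ + (D : ℝ) * δ and T₂ m ≤ 2 * δ + (D : ℝ) * δ, and if moreover T₃ m ≤ max (T₁ m) (T₂ m), then for every vertex v : V, T₃ v ≤ 2 * ((D : ℝ) + 1) * δ. -/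
lemma relay_dist {V : Type*} (G : SimpleGraph V) (δ : ℝ) (hδ : 0 ≤ δ)
    (T : V → ℝ) (h : ∀ u v : V, G.Adj u v → T v ≤ T u + δ)
    {u v : V} (p : G.Walk u v) : T v ≤ T u + (p.length : ℝ) * δ := by
  induction p with
  | nil => simp
  | cons ha p ih =>
      rename_i a b c
      calc T c ≤ T b + (p.length : ℝ) * δ := ih
        _ ≤ (T a + δ) + (p.length : ℝ) * δ := by linarith [h a b ha]
        _ = T a + ((SimpleGraph.Walk.cons ha p).length : ℝ) * δ := by
            simp [SimpleGraph.Walk.length_cons]; push_cast; ring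

lemma relay_le {V : Type*} [Fintype V] [Nonempty V] (G : SimpleGraph V)
    (hG : G.Connected) (δ : ℝ) (hδ : 0 ≤ δ)
    (T : V → ℝ) (h : ∀ u v : V, G.Adj u v → T v ≤ T u + δ) (u v : V) :
    T v ≤ T u + (G.diam : ℝ) * δ := by
  have hne : G.ediam ≠ ⊤ := by
    have : G.ediam ≤ (Fintype.card V : ℕ∞) := by
      rw [SimpleGraph.ediam]
      refine iSup₂_le fun a b => ?_
      classical
      obtain ⟨w⟩ := hG a b
      have hlt := (SimpleGraph.Walk.bypass_isPath w).length_lt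
      calc G.edist a b ≤ w.bypass.length := SimpleGraph.edist_le _
        _ ≤ (Fintype.card V : ℕ∞) := by exact_mod_cast hlt.le
    exact ne_top_of_le_ne_top (by simp) this
  obtain ⟨p, hp⟩ := (hG u v).exists_walk_length_eq_dist
  have := relay_dist G δ hδ T h p
  have hle : (p.length : ℝ) * δ ≤ (G.diam : ℝ) * δ := by
    apply mul_le_mul_of_nonneg_right _ hδ
    exact_mod_cast hp ▸ SimpleGraph.dist_le_diam hne
  linarith

/-- Timing core of equivocation detection in KTCA: two conflicting STRs held by
`x` and `y` within `2δ` of the epoch start both reach some client `m` within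
`2δ + diam(G)·δ`, and the proof of misbehavior generated by `m` reaches every
client by `2·(diam(G)+1)·δ`. -/
theorem stmt_5 {V : Type*} [Fintype V] [Nonempty V]
    (G : SimpleGraph V) (hG : G.Connected)
    (δ : ℝ) (hδ : 0 ≤ δ) (D : ℕ) (hD : D = G.diam)
    (T₁ T₂ T₃ : V → ℝ)
    (h₁ : ∀ u v : V, G.Adj u v → T₁ v ≤ T₁ u + δ)
    (h₂ : ∀ u v : V, G.Adj u v → T₂ v ≤ T₂ u + δ)
    (h₃ : ∀ u v : V, G.Adj u v → T₃ v ≤ T₃ u + δ)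
    (x y : V) (hx : T₁ x ≤ 2 * δ) (hy : T₂ y ≤ 2 * δ) :
    ∃ m : V, T₁ m ≤ 2 * δ + (D : ℝ) * δ ∧ T₂ m ≤ 2 * δ + (D : ℝ) * δ ∧
      (T₃ m ≤ max (T₁ m) (T₂ m) → ∀ v : V, T₃ v ≤ 2 * ((D : ℝ) + 1) * δ) := by
  subst hD
  have hDδ : (0:ℝ) ≤ (G.diam : ℝ) * δ := mul_nonneg (by positivity) hδ
  have hm1 : T₁ y ≤ 2 * δ + (G.diam : ℝ) * δ := by
    have := relay_le G hG δ hδ T₁ h₁ x y; linarith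
  have hm2 : T₂ y ≤ 2 * δ + (G.diam : ℝ) * δ := by linarith
  refine ⟨y, hm1, hm2, fun h3 v => ?_⟩
  have := relay_le G hG δ hδ T₃ h₃ y v
  have hmax : max (T₁ y) (T₂ y) ≤ 2 * δ + (G.diam : ℝ) * δ := max_le hm1 hm2
  nlinarith
end

section
/- Let m : ℕ, c : Fin m → ℕ, and off : Fin m → Bool, and fix a : (i : Fin m) → Fin (c i + 1). Under the product of uniform probability mass functions on Π (i : Fin m), Fin (c i + 1), the probability of the event {f | ∀ i, off i = true ∨ f i = a i} equals ∏ i, (if off i then 1 else 1 / (c i + 1 : ℝ≥0∞)); hence the probability of its complement (detection) equals 1 - ∏ i, (if off i then 1 else 1 / (c i + 1 : ℝ≥0∞)). -/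
open scoped ENNReal

/-- AKM with offline clients (Theorem 6.1, second part): the product of uniform
distributions on `Π i, Fin (c i + 1)` (i.e. the uniform distribution on the
product space) gives the event "in every epoch, either the owner is offline or
the server's guess is correct" probability `∏ i, if off i then 1 else 1/(c i + 1)`;
the complementary detection event has probability one minus this product. -/
theorem stmt_7 (m : ℕ) (c : Fin m → ℕ) (off : Fin m → Bool)
    (a : (i : Fin m) → Fin (c i + 1)) :
    (PMF.uniformOfFintype ((i : Fin m) → Fin (c i + 1))).toMeasure
        {f | ∀ i, off i = true ∨ f i = a i}
        = ∏ i, (if off i then 1 else 1 / (c i + 1 : ℝ≥0∞)) ∧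
    (PMF.uniformOfFintype ((i : Fin m) → Fin (c i + 1))).toMeasure
        {f | ∀ i, off i = true ∨ f i = a i}ᶜ
        = 1 - ∏ i, (if off i then 1 else 1 / (c i + 1 : ℝ≥0∞)) := by
  set S : Set ((i : Fin m) → Fin (c i + 1)) := {f | ∀ i, off i = true ∨ f i = a i} with hS
  have hmeas : MeasurableSet S := (Set.toFinite S).measurableSet
  have hcard : (Fintype.card ((i : Fin m) → Fin (c i + 1)) : ℝ≥0∞)
      = ∏ i, ((c i : ℝ≥0∞) + 1) := by
    rw [Fintype.card_pi]
    push_cast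
    simp [Fintype.card_fin]
  have hfac_ne0 : ∀ i : Fin m, ((c i : ℝ≥0∞) + 1) ≠ 0 := fun i => by simp
  have hfac_netop : ∀ i : Fin m, ((c i : ℝ≥0∞) + 1) ≠ ⊤ := fun i => by
    simp [ENNReal.add_ne_top]
  have key : (PMF.uniformOfFintype ((i : Fin m) → Fin (c i + 1))).toMeasure S
      = ∏ i, (if off i then 1 else 1 / (c i + 1 : ℝ≥0∞)) := by
    rw [PMF.toMeasure_apply_fintype]
    have hind : ∀ f : (i : Fin m) → Fin (c i + 1),
        S.indicator (PMF.uniformOfFintype ((i : Fin m) → Fin (c i + 1))) f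
        = (∏ i, if off i = true ∨ f i = a i then (1 : ℝ≥0∞) else 0)
            * (∏ i, ((c i : ℝ≥0∞) + 1))⁻¹ := by
      intro f
      rw [Set.indicator_apply]
      by_cases h : f ∈ S
      · have : (∏ i, if off i = true ∨ f i = a i then (1 : ℝ≥0∞) else 0) = 1 :=
          Finset.prod_eq_one fun i _ => by simp [h i]
        rw [if_pos h, this, one_mul, PMF.uniformOfFintype_apply, hcard]
      · obtain ⟨i, hi⟩ := not_forall.mp h
        have : (∏ j, if off j = true ∨ f j = a j then (1 : ℝ≥0∞) else 0) = 0 := by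
          apply Finset.prod_eq_zero (Finset.mem_univ i)
          simp [hi]
        rw [if_neg h, this, zero_mul]
    simp_rw [hind]
    rw [← Finset.sum_mul, ← Fintype.prod_sum (fun i (x : Fin (c i + 1)) =>
      if off i = true ∨ x = a i then (1 : ℝ≥0∞) else 0)]
    have hsum : ∀ i : Fin m,
        (∑ x : Fin (c i + 1), if off i = true ∨ x = a i then (1 : ℝ≥0∞) else 0)
        = if off i then (c i : ℝ≥0∞) + 1 else 1 := by
      intro i
      by_cases h : off i = true
      · simp [h, Fintype.card_fin]
      · simp only [h, Bool.false_eq_true, false_or, if_false]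
        rw [Finset.sum_ite_eq' Finset.univ (a i) (fun _ => (1:ℝ≥0∞))]
        simp
    simp_rw [hsum]
    rw [ENNReal.prod_inv_distrib (fun i _ j _ _ => Or.inl (hfac_ne0 i)),
      ← Finset.prod_mul_distrib]
    apply Finset.prod_congr rfl
    intro i _
    by_cases h : off i = true
    · simp [h, ENNReal.mul_inv_cancel (hfac_ne0 i) (hfac_netop i)]
    · simp [h, one_div]
  refine ⟨key, ?_⟩
  have hle : (PMF.uniformOfFintype ((i : Fin m) → Fin (c i + 1))).toMeasure S ≠ ⊤ := by
    exact (MeasureTheory.measure_lt_top _ _).ne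
  rw [MeasureTheory.measure_compl hmeas hle, key]
  simp
end
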